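/- Suppose the wage distribution w is single-peaked on [0,1] with peak x₁ (w'(x)>0 for x∈[0,x₁), w'(x)<0 for x∈(x₁,1]) and concave there: w''(x) ≤ 0 for x∈[0,1], and let 0 ≤ x₀ < x₁. Then the boundary value system ẋ(t)=y(t)/F(t), ẏ(t)=−w'(x(t))·λ₁·e^{−rt}, x(0)=x₀, y(T)=0 on [0,T], where F(t)=2(ξ·λ₁·e^{−rt}+η·e^{−ρt}) and λ₁>0, has exactly one solution (x,y); i.e. there exists a unique extremal. -/

import Mathlib

/-!
Uniqueness: for two extremals `(x, y)` and `(x', y')` the product `φ = (x - x') (y - y')`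
vanishes at `t = 0` and `t = T`, while
`φ' = (y - y')² / F + (x - x') (w'(x') - w'(x)) λ₁ e^{-rt} ≥ 0` as long as both paths stay in
`[0, 1]`, where concavity makes `w'` antitone. Hence `φ ≡ 0`, which forces `y = y'` and then
`x = x'`. Extremals cannot leave `[0, 1]` because `w' < 0` to the right of `1` (and `w' > 0` to
the left of `0`): at a maximum of `x` above `1` we have `y = 0` and `ẏ > 0` just before, so
`ẋ < 0` there and `x` was larger a moment earlier.

Existence is by shooting on `α = y(0)`. After extending `w'|[0,1]` by constants and clamping `y`
in `ẋ = y / F`, the vector field is bounded and globally Lipschitz, so Picard–Lindelöf gives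
solutions depending continuously on `α`. Since `ẏ` is bounded, `|y(T) - α| ≤ D` for an
explicit `D`, and the intermediate value theorem yields `α ∈ [-D, D]` with `y(T) = 0`. Along
this solution `|y| ≤ 2D`, so clamping at `2D` changes nothing, and `x` stays in `[0, 1]`, where
the extension is `w'` itself.
-/

/-- `F(t) = 2 (ξ λ₁ e^{-rt} + η e^{-ρt})`. -/
noncomputable def Ffun (ξ lam1 η r ρ : ℝ) (t : ℝ) : ℝ :=
  2 * (ξ * lam1 * Real.exp (-(r * t)) + η * Real.exp (-(ρ * t)))

/-- `w` is single-peaked on `[0,1]` with interior peak `x₁`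
(`w' > 0` on `[0,x₁)`, `w' < 0` on `(x₁,1]`) and concave there (`w'' ≤ 0`). -/
def SinglePeakedConcave (w : ℝ → ℝ) (x₁ : ℝ) : Prop :=
  x₁ ∈ Set.Ioo (0:ℝ) 1 ∧
    (∀ s : ℝ, 0 ≤ s → s < x₁ → 0 < deriv w s) ∧
    (∀ s : ℝ, x₁ < s → s ≤ 1 → deriv w s < 0) ∧
    (∀ s ∈ Set.Icc (0:ℝ) 1, deriv (deriv w) s ≤ 0)

/-- `(x,y)` solves the boundary value system
`ẋ = y/F`, `ẏ = -w'(x) λ₁ e^{-rt}` on `[0,T]`, `x(0) = x₀`, `y(T) = 0`. -/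
def ExtremalSol (ρ r η ξ lam1 T x₀ : ℝ) (w : ℝ → ℝ) (x y : ℝ → ℝ) : Prop :=
  x 0 = x₀ ∧ y T = 0 ∧
    (∀ t ∈ Set.Icc (0:ℝ) T, HasDerivAt x (y t / Ffun ξ lam1 η r ρ t) t) ∧
    (∀ t ∈ Set.Icc (0:ℝ) T,
      HasDerivAt y (-(deriv w (x t) * lam1 * Real.exp (-(r * t)))) t)

open Set Metric
open scoped NNReal

theorem exists_flow_of_lipschitzWith_of_norm_le {E : Type*} [NormedAddCommGroup E]
    [NormedSpace ℝ E] [CompleteSpace E] {v : ℝ → E → E} {tmin tmax : ℝ} (t₀ : Icc tmin tmax)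
    {K : ℝ≥0} {L : ℝ} (hlip : ∀ t ∈ Icc tmin tmax, LipschitzWith K (v t))
    (hcont : ∀ p, ContinuousOn (v · p) (Icc tmin tmax))
    (hnorm : ∀ t ∈ Icc tmin tmax, ∀ p, ‖v t p‖ ≤ L) (c : E) (R : ℝ≥0) :
    ∃ α : E → ℝ → E, (∀ p ∈ closedBall c R, α p t₀ = p ∧
      ∀ t ∈ Icc tmin tmax, HasDerivWithinAt (α p) (v t (α p t)) (Icc tmin tmax) t) ∧
      ∃ K' : ℝ≥0, ∀ t ∈ Icc tmin tmax, LipschitzOnWith K' (α · t) (closedBall c R) := by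
  set τ := (max (tmax - t₀) (t₀ - tmin)).toNNReal
  have hpl : IsPicardLindelof v t₀ c (R + L.toNNReal * τ) R L.toNNReal K :=
    { lipschitzOnWith := fun t ht => (hlip t ht).lipschitzOnWith
      continuousOn := fun p _ => hcont p
      norm_le := fun t ht p _ => (hnorm t ht p).trans (Real.le_coe_toNNReal L)
      mul_max_le := by
        rw [NNReal.coe_add, add_sub_cancel_left, NNReal.coe_mul]
        exact mul_le_mul_of_nonneg_left (Real.le_coe_toNNReal _) L.toNNReal.2 }
  exact hpl.exists_forall_mem_closedBall_eq_hasDerivWithinAt_lipschitzOnWith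

theorem IsCompact.exists_nnnorm_le_of_continuousOn {α E : Type*} [TopologicalSpace α]
    [SeminormedAddGroup E] {s : Set α} (hs : IsCompact s) {f : α → E} (hf : ContinuousOn f s) :
    ∃ M : ℝ≥0, ∀ t ∈ s, ‖f t‖₊ ≤ M :=
  let ⟨M, hM⟩ := (hs.image_of_continuousOn hf.nnnorm).bddAbove
  ⟨M, fun _ ht => hM (mem_image_of_mem _ ht)⟩

theorem strictMonoOn_Icc_of_hasDerivAt_pos {f f' : ℝ → ℝ} {a b : ℝ}
    (hf : ∀ t ∈ Icc a b, HasDerivAt f (f' t) t) (hf' : ∀ t ∈ Ioo a b, 0 < f' t) :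
    StrictMonoOn f (Icc a b) :=
  strictMonoOn_of_hasDerivWithinAt_pos (convex_Icc a b)
    (fun t ht => (hf t ht).continuousAt.continuousWithinAt)
    (fun t ht => (hf t (interior_subset ht)).hasDerivWithinAt)
    (fun t ht => hf' t (by rwa [interior_Icc] at ht))

theorem forall_le_of_deriv_pos_above {F x y y' : ℝ → ℝ} {T c : ℝ}
    (hF : ∀ t ∈ Icc 0 T, 0 < F t) (hx₀ : x 0 ≤ c) (hyT : y T = 0)
    (hx : ∀ t ∈ Icc 0 T, HasDerivAt x (y t / F t) t)
    (hy : ∀ t ∈ Icc 0 T, HasDerivAt y (y' t) t)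
    (hy' : ∀ t ∈ Icc 0 T, c < x t → 0 < y' t) :
    ∀ t ∈ Icc 0 T, x t ≤ c := by
  by_contra! ⟨t₁, ht₁, hct₁⟩
  obtain ⟨s, hs, hmax⟩ := isCompact_Icc.exists_isMaxOn ⟨t₁, ht₁⟩
    fun t ht => (hx t ht).continuousAt.continuousWithinAt
  have hcs : c < x s := hct₁.trans_le (hmax ht₁)
  have hs₀ : 0 < s := hs.1.lt_of_ne (by rintro rfl; linarith)
  have hys : y s = 0 := by
    rcases hs.2.eq_or_lt with rfl | hsT
    · exact hyT
    · have := (hmax.isLocalMax (Icc_mem_nhds hs₀ hsT)).hasDerivAt_eq_zero (hx s hs)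
      exact (div_eq_zero_iff.mp this).resolve_right (hF s hs).ne'
  obtain ⟨l, ⟨hl₀, hls⟩, hlx⟩ := exists_Ioc_subset_of_mem_nhds'
    ((hx s hs).continuousAt.preimage_mem_nhds (Ioi_mem_nhds hcs)) hs₀
  obtain ⟨u, hlu, hus⟩ := exists_between hls
  have hsub : Icc u s ⊆ Icc 0 T := Icc_subset_Icc (hl₀.trans hlu.le) hs.2
  have hcx : ∀ t ∈ Icc u s, c < x t := fun t ht => hlx ⟨hlu.trans_le ht.1, ht.2⟩
  have hy_mono : StrictMonoOn y (Icc u s) := strictMonoOn_Icc_of_hasDerivAt_pos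
    (fun t ht => hy t (hsub ht))
    (fun t ht => hy' t (hsub (Ioo_subset_Icc_self ht)) (hcx t (Ioo_subset_Icc_self ht)))
  have hx_anti : StrictMonoOn (fun t => -x t) (Icc u s) := strictMonoOn_Icc_of_hasDerivAt_pos
    (fun t ht => (hx t (hsub ht)).neg) fun t ht => by
      have hyt : y t < 0 := hys ▸ hy_mono (Ioo_subset_Icc_self ht) (right_mem_Icc.2 hus.le) ht.2
      exact neg_pos.2 (div_neg_of_neg_of_pos hyt (hF t (hsub (Ioo_subset_Icc_self ht))))
  have hu : u ∈ Icc u s := left_mem_Icc.2 hus.le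
  have hxus : x s < x u := neg_lt_neg_iff.1 (hx_anti hu (right_mem_Icc.2 hus.le) hus)
  exact (isMaxOn_iff.1 hmax u (hsub hu)).not_gt hxus

theorem forall_ge_of_deriv_neg_below {F x y y' : ℝ → ℝ} {T c : ℝ}
    (hF : ∀ t ∈ Icc 0 T, 0 < F t) (hx₀ : c ≤ x 0) (hyT : y T = 0)
    (hx : ∀ t ∈ Icc 0 T, HasDerivAt x (y t / F t) t)
    (hy : ∀ t ∈ Icc 0 T, HasDerivAt y (y' t) t)
    (hy' : ∀ t ∈ Icc 0 T, x t < c → y' t < 0) :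
    ∀ t ∈ Icc 0 T, c ≤ x t := by
  have := forall_le_of_deriv_pos_above (x := fun t => -x t) (y := fun t => -y t)
    (y' := fun t => -y' t) (c := -c) hF (neg_le_neg hx₀) (by simp [hyT])
    (fun t ht => by rw [neg_div]; exact (hx t ht).neg) (fun t ht => (hy t ht).neg)
    (fun t ht hct => neg_pos.2 (hy' t ht (neg_lt_neg_iff.1 hct)))
  exact fun t ht => neg_le_neg_iff.1 (this t ht)

structure IsExtremal (F G g : ℝ → ℝ) (T x₀ : ℝ) (x y : ℝ → ℝ) : Prop where
  x_zero : x 0 = x₀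
  y_T : y T = 0
  hasDerivAt_x : ∀ t ∈ Icc 0 T, HasDerivAt x (y t / F t) t
  hasDerivAt_y : ∀ t ∈ Icc 0 T, HasDerivAt y (-(g (x t) * G t)) t

namespace IsExtremal

variable {F G g : ℝ → ℝ} {T x₀ : ℝ} {x y x' y' : ℝ → ℝ}

theorem mapsTo_Icc {a b : ℝ} (h : IsExtremal F G g T x₀ x y) (hF : ∀ t ∈ Icc 0 T, 0 < F t)
    (hG : ∀ t ∈ Icc 0 T, 0 < G t) (hga : ∀ s < a, 0 < g s) (hgb : ∀ s, b < s → g s < 0)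
    (hx₀ : x₀ ∈ Icc a b) : MapsTo x (Icc 0 T) (Icc a b) := fun t ht =>
  ⟨forall_ge_of_deriv_neg_below hF (h.x_zero ▸ hx₀.1) h.y_T h.hasDerivAt_x h.hasDerivAt_y
      (fun t ht hxt => neg_neg_of_pos (mul_pos (hga _ hxt) (hG t ht))) t ht,
    forall_le_of_deriv_pos_above hF (h.x_zero ▸ hx₀.2) h.y_T h.hasDerivAt_x h.hasDerivAt_y
      (fun t ht hxt => neg_pos.2 (mul_neg_of_neg_of_pos (hgb _ hxt) (hG t ht))) t ht⟩

theorem eqOn_y_of_antitoneOn {s : Set ℝ} (hT : 0 < T) (hF : ∀ t ∈ Icc 0 T, 0 < F t)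
    (hG : ∀ t ∈ Icc 0 T, 0 ≤ G t) (hg : AntitoneOn g s)
    (h : IsExtremal F G g T x₀ x y) (h' : IsExtremal F G g T x₀ x' y')
    (hxs : MapsTo x (Icc 0 T) s) (hx's : MapsTo x' (Icc 0 T) s) :
    EqOn y y' (Icc 0 T) := by
  set φ : ℝ → ℝ := fun t => (x t - x' t) * (y t - y' t)
  set D : ℝ → ℝ := fun t => (y t - y' t) ^ 2 / F t
  set E : ℝ → ℝ := fun t => -((g (x t) - g (x' t)) * (x t - x' t)) * G t
  have hφ : ∀ t ∈ Icc 0 T, HasDerivAt φ (D t + E t) t := fun t ht =>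
    (((h.hasDerivAt_x t ht).sub (h'.hasDerivAt_x t ht)).mul
      ((h.hasDerivAt_y t ht).sub (h'.hasDerivAt_y t ht))).congr_deriv
      (by simp only [D, E, Pi.sub_apply]; ring)
  have hD : ∀ t ∈ Icc 0 T, 0 ≤ D t := fun t ht => div_nonneg (sq_nonneg _) (hF t ht).le
  have hE : ∀ t ∈ Icc 0 T, 0 ≤ E t := fun t ht =>
    mul_nonneg (neg_nonneg.2 ((antivaryOn_id_iff.2 hg).sub_mul_sub_nonpos (hx's ht) (hxs ht)))
      (hG t ht)
  have hφ_mono : MonotoneOn φ (Icc 0 T) :=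
    monotoneOn_of_hasDerivWithinAt_nonneg (convex_Icc 0 T)
      (fun t ht => (hφ t ht).continuousAt.continuousWithinAt)
      (fun t ht => (hφ t (interior_subset ht)).hasDerivWithinAt)
      (fun t ht => add_nonneg (hD t (interior_subset ht)) (hE t (interior_subset ht)))
  have hφ_zero : ∀ t ∈ Icc 0 T, φ t = 0 := fun t ht => by
    have h0 : φ 0 = 0 := by simp [φ, h.x_zero, h'.x_zero]
    have hT' : φ T = 0 := by simp [φ, h.y_T, h'.y_T]
    exact le_antisymm (hT' ▸ hφ_mono ht (right_mem_Icc.2 hT.le) ht.2)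
      (h0 ▸ hφ_mono (left_mem_Icc.2 hT.le) ht ht.1)
  intro t ht
  have hDE : D t + E t = 0 := (uniqueDiffOn_Icc hT t ht).eq_deriv _ (hφ t ht).hasDerivWithinAt
    ((hasDerivWithinAt_const t _ 0).congr hφ_zero (hφ_zero t ht))
  have hDt : (y t - y' t) ^ 2 / F t = 0 := by linarith [hD t ht, hE t ht]
  rwa [div_eq_zero_iff, or_iff_left (hF t ht).ne', sq_eq_zero_iff, sub_eq_zero] at hDt

theorem eqOn_of_antitoneOn {s : Set ℝ} (hT : 0 < T) (hF : ∀ t ∈ Icc 0 T, 0 < F t)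
    (hG : ∀ t ∈ Icc 0 T, 0 ≤ G t) (hg : AntitoneOn g s)
    (h : IsExtremal F G g T x₀ x y) (h' : IsExtremal F G g T x₀ x' y')
    (hxs : MapsTo x (Icc 0 T) s) (hx's : MapsTo x' (Icc 0 T) s) :
    EqOn x x' (Icc 0 T) ∧ EqOn y y' (Icc 0 T) := by
  have hyy' := eqOn_y_of_antitoneOn hT hF hG hg h h' hxs hx's
  have hd : ∀ t ∈ Icc 0 T, HasDerivAt (fun t => x t - x' t) 0 t := fun t ht =>
    ((h.hasDerivAt_x t ht).sub (h'.hasDerivAt_x t ht)).congr_deriv (by rw [hyy' ht, sub_self])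
  refine ⟨fun t ht => ?_, hyy'⟩
  have := constant_of_has_deriv_right_zero
    (fun t ht => (hd t ht).continuousAt.continuousWithinAt)
    (fun t ht => (hd t (Ico_subset_Icc_self ht)).hasDerivWithinAt) t ht
  rwa [h.x_zero, h'.x_zero, sub_self, sub_eq_zero] at this

theorem congr_of_eqOn {s : Set ℝ} {g' : ℝ → ℝ} (h : IsExtremal F G g T x₀ x y)
    (hg : EqOn g g' s) (hx : MapsTo x (Icc 0 T) s) : IsExtremal F G g' T x₀ x y :=
  ⟨h.x_zero, h.y_T, h.hasDerivAt_x, fun t ht => hg (hx ht) ▸ h.hasDerivAt_y t ht⟩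

end IsExtremal

noncomputable def truncatedField (F G g : ℝ → ℝ) (B t : ℝ) (p : ℝ × ℝ) : ℝ × ℝ :=
  ((F t)⁻¹ * max (-B) (min B p.2), -G t * g p.1)

theorem lipschitzWith_truncatedField {F G g : ℝ → ℝ} {K : ℝ≥0} (hg : LipschitzWith K g)
    (B t : ℝ) : LipschitzWith (max ‖(F t)⁻¹‖₊ (‖G t‖₊ * K)) (truncatedField F G g B t) := by
  have h₁ := (lipschitzWith_smul (F t)⁻¹).comp
    ((((LipschitzWith.id (α := ℝ)).const_min B).const_max (-B)).comp
      (LipschitzWith.prod_snd (α := ℝ)))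
  have h₂ := (lipschitzWith_smul (-G t)).comp (hg.comp (LipschitzWith.prod_fst (β := ℝ)))
  exact (h₁.prodMk h₂).weaken (by simp [nnnorm_neg])

theorem norm_truncatedField_le {F G g : ℝ → ℝ} {C B : ℝ} (hB : 0 ≤ B) (hgC : ∀ s, ‖g s‖ ≤ C)
    (t : ℝ) (p : ℝ × ℝ) :
    ‖truncatedField F G g B t p‖ ≤ max (‖(F t)⁻¹‖ * B) (‖G t‖ * C) := by
  rw [truncatedField, Prod.norm_mk, norm_mul, norm_mul, norm_neg]
  refine max_le_max (mul_le_mul_of_nonneg_left ?_ (norm_nonneg _))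
    (mul_le_mul_of_nonneg_left (hgC _) (norm_nonneg _))
  rw [Real.norm_eq_abs, abs_le]
  constructor
  · exact le_max_left _ _
  · exact max_le (by linarith) (min_le_left _ _)

theorem exists_flow_truncatedField {F G g : ℝ → ℝ} {T B R C : ℝ} {K : ℝ≥0} (x₀ : ℝ)
    (hT : 0 ≤ T) (hB : 0 ≤ B) (hF : Continuous F) (hF₀ : ∀ t, F t ≠ 0) (hG : Continuous G)
    (hg : LipschitzWith K g) (hgC : ∀ s, ‖g s‖ ≤ C) :
    ∃ φ : ℝ → ℝ → ℝ × ℝ, (∀ α ∈ Icc (-R) R, φ α 0 = (x₀, α) ∧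
      ∀ t ∈ Icc 0 T, HasDerivAt (φ α) (truncatedField F G g B t (φ α t)) t) ∧
      ContinuousOn (fun α => φ α T) (Icc (-R) R) := by
  have hC : 0 ≤ C := (norm_nonneg _).trans (hgC 0)
  obtain ⟨m, hm⟩ := (isCompact_Icc (a := -1) (b := T + 1)).exists_nnnorm_le_of_continuousOn
    (hF.inv₀ hF₀).continuousOn
  obtain ⟨M, hM⟩ := (isCompact_Icc (a := -1) (b := T + 1)).exists_nnnorm_le_of_continuousOn
    hG.continuousOn
  obtain ⟨φ, hφ, K', hφK'⟩ := exists_flow_of_lipschitzWith_of_norm_le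
    (v := truncatedField F G g B) ⟨0, by constructor <;> linarith⟩ (K := max m (M * K))
    (L := max (m * B) (M * C))
    (fun t ht => (lipschitzWith_truncatedField hg B t).weaken
      (max_le_max (hm t ht) (by gcongr; exact hM t ht)))
    (fun p => (((hF.inv₀ hF₀).mul continuous_const).prodMk
      (hG.neg.mul continuous_const)).continuousOn)
    (fun t ht p => (norm_truncatedField_le hB hgC t p).trans
      (max_le_max (mul_le_mul_of_nonneg_right (hm t ht) hB)
        (mul_le_mul_of_nonneg_right (hM t ht) hC)))
    (x₀, 0) R.toNNReal
  have hball : MapsTo (fun α => (x₀, α)) (Icc (-R) R) (closedBall (x₀, 0) R.toNNReal) :=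
    fun α hα => by
      rw [mem_closedBall, Prod.dist_eq, dist_self, Real.coe_toNNReal _ (by linarith [hα.1, hα.2]),
        Real.dist_eq, sub_zero]
      exact max_le (by linarith [hα.1, hα.2]) (abs_le.2 hα)
  have hI : Icc 0 T ⊆ Ioo (-1) (T + 1) := fun t ht => ⟨by linarith [ht.1], by linarith [ht.2]⟩
  refine ⟨fun α => φ (x₀, α), fun α hα => ⟨(hφ _ (hball hα)).1, fun t ht => ?_⟩,
    (hφK' T (Ioo_subset_Icc_self (hI (right_mem_Icc.2 hT)))).continuousOn.comp
      (Continuous.continuousOn (by fun_prop)) hball⟩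
  exact ((hφ _ (hball hα)).2 t (Ioo_subset_Icc_self (hI ht))).hasDerivAt
    (Icc_mem_nhds (hI ht).1 (hI ht).2)

theorem exists_isExtremal {F G g : ℝ → ℝ} {T C : ℝ} {K : ℝ≥0} (x₀ : ℝ) (hT : 0 ≤ T)
    (hF : Continuous F) (hF₀ : ∀ t, F t ≠ 0) (hG : Continuous G)
    (hg : LipschitzWith K g) (hgC : ∀ s, ‖g s‖ ≤ C) :
    ∃ x y, IsExtremal F G g T x₀ x y := by
  obtain ⟨M, hM⟩ := isCompact_Icc.exists_bound_of_continuousOn (s := Icc 0 T) hG.continuousOn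
  have hM₀ : 0 ≤ M := (norm_nonneg _).trans (hM 0 (left_mem_Icc.2 hT))
  have hC : 0 ≤ C := (norm_nonneg _).trans (hgC 0)
  set D : ℝ := M * C * T
  have hD : 0 ≤ D := by positivity
  obtain ⟨φ, hφ, hφT⟩ := exists_flow_truncatedField (B := 2 * D) (R := D) x₀ hT (by linarith)
    hF hF₀ hG hg hgC
  have hdrift : ∀ α ∈ Icc (-D) D, ∀ t ∈ Icc 0 T, |(φ α t).2 - α| ≤ D := fun α hα t ht => by
    have := norm_image_sub_le_of_norm_deriv_le_segment' (f := fun t => (φ α t).2) (C := M * C)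
      (fun s hs => (hasFDerivAt_snd.comp_hasDerivAt s ((hφ α hα).2 s hs)).hasDerivWithinAt)
      (fun s hs => by
        change ‖-G s * g _‖ ≤ _
        rw [norm_mul, norm_neg]
        exact mul_le_mul (hM s (Ico_subset_Icc_self hs)) (hgC _) (norm_nonneg _) hM₀) t ht
    rw [(hφ α hα).1] at this
    exact this.trans (mul_le_mul_of_nonneg_left (by linarith [ht.2]) (by positivity))
  have hT' : T ∈ Icc 0 T := right_mem_Icc.2 hT
  have hY : (0 : ℝ) ∈ Icc (φ (-D) T).2 (φ D T).2 :=
    ⟨by linarith [(abs_le.1 (hdrift (-D) (left_mem_Icc.2 (by linarith)) T hT')).2],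
      by linarith [(abs_le.1 (hdrift D (right_mem_Icc.2 (by linarith)) T hT')).1]⟩
  obtain ⟨α, hα, hαT⟩ :=
    intermediate_value_Icc (by linarith) (continuous_snd.comp_continuousOn hφT) hY
  refine ⟨fun t => (φ α t).1, fun t => (φ α t).2,
    ⟨by simp [(hφ α hα).1], hαT, fun t ht => ?_, fun t ht => ?_⟩⟩
  · have hy := abs_le.1 (hdrift α hα t ht)
    refine (hasFDerivAt_fst.comp_hasDerivAt t ((hφ α hα).2 t ht)).congr_deriv ?_
    change (F t)⁻¹ * max (-(2 * D)) (min (2 * D) _) = _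
    rw [min_eq_right (by linarith [hα.2]), max_eq_right (by linarith [hα.1]), inv_mul_eq_div]
  · refine (hasFDerivAt_snd.comp_hasDerivAt t ((hφ α hα).2 t ht)).congr_deriv ?_
    change -G t * g _ = _
    ring

theorem exists_isExtremal_mapsTo_Icc {F G g : ℝ → ℝ} {T x₀ a b : ℝ} {K : ℝ≥0} (hT : 0 ≤ T)
    (hF : Continuous F) (hF₀ : ∀ t, 0 < F t) (hG : Continuous G) (hG₀ : ∀ t, 0 < G t)
    (hg : LipschitzOnWith K g (Icc a b)) (ha : 0 < g a) (hb : g b < 0) (hx₀ : x₀ ∈ Icc a b) :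
    ∃ x y, IsExtremal F G g T x₀ x y ∧ MapsTo x (Icc 0 T) (Icc a b) := by
  have hab : a ≤ b := hx₀.1.trans hx₀.2
  obtain ⟨C, hC⟩ := isCompact_Icc.exists_bound_of_continuousOn hg.continuousOn
  obtain ⟨x, y, h⟩ := exists_isExtremal (g := IccExtend hab ((Icc a b).domRestrict g)) x₀ hT hF
    (fun t => (hF₀ t).ne') hG (hg.to_restrict.comp (LipschitzWith.projIcc hab))
    (fun s => hC _ (projIcc a b hab s).2)
  have hx := h.mapsTo_Icc (fun t _ => hF₀ t) (fun t _ => hG₀ t)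
    (fun s hs => by rwa [IccExtend_of_le_left _ _ hs.le])
    (fun s hs => by rwa [IccExtend_of_right_le _ _ hs.le]) hx₀
  exact ⟨x, y, h.congr_of_eqOn (fun s hs => IccExtend_of_mem _ _ hs) hx, hx⟩

theorem extremalSol_iff_isExtremal {ρ r η ξ lam1 T x₀ : ℝ} {w x y : ℝ → ℝ} :
    ExtremalSol ρ r η ξ lam1 T x₀ w x y ↔
      IsExtremal (Ffun ξ lam1 η r ρ) (fun t => lam1 * Real.exp (-(r * t))) (deriv w) T x₀ x y := by
  simp only [ExtremalSol, mul_assoc]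
  exact ⟨fun ⟨h₁, h₂, h₃, h₄⟩ => ⟨h₁, h₂, h₃, h₄⟩, fun ⟨h₁, h₂, h₃, h₄⟩ => ⟨h₁, h₂, h₃, h₄⟩⟩

theorem unique_extremal_single_peak_general
    (ρ r η ξ lam1 T x₀ x₁ : ℝ)
    (hη : 0 < η) (hξ : 0 < ξ)
    (hlam1 : 0 < lam1) (hT : 0 < T)
    (w : ℝ → ℝ) (hw : ContDiff ℝ 2 w)
    (hw0 : ∀ s : ℝ, s ≤ 0 → 0 < deriv w s)
    (hw1 : ∀ s : ℝ, 1 ≤ s → deriv w s < 0)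
    (hpeak : SinglePeakedConcave w x₁)
    (hx₀ : 0 ≤ x₀) (hx₀x₁ : x₀ < x₁) :
    ∃ x y : ℝ → ℝ, ExtremalSol ρ r η ξ lam1 T x₀ w x y ∧
      ∀ x' y' : ℝ → ℝ, ExtremalSol ρ r η ξ lam1 T x₀ w x' y' →
        ∀ t ∈ Set.Icc (0:ℝ) T, x' t = x t ∧ y' t = y t := by
  obtain ⟨hx₁, -, -, hw''⟩ := hpeak
  have hw' : ContDiff ℝ 1 (deriv w) := hw.deriv'
  have hF : ∀ t, 0 < Ffun ξ lam1 η r ρ t := fun t => by unfold Ffun; positivity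
  have hG : ∀ t, 0 < lam1 * Real.exp (-(r * t)) := fun t => by positivity
  have hx₀' : x₀ ∈ Icc 0 1 := ⟨hx₀, hx₀x₁.le.trans hx₁.2.le⟩
  obtain ⟨K, hK⟩ :=
    hw'.contDiffOn.exists_lipschitzOnWith one_ne_zero (convex_Icc (0 : ℝ) 1) isCompact_Icc
  obtain ⟨x, y, hxy, hx⟩ := exists_isExtremal_mapsTo_Icc hT.le (by unfold Ffun; fun_prop) hF
    (by fun_prop) hG hK (hw0 0 le_rfl) (hw1 1 le_rfl) hx₀'
  refine ⟨x, y, extremalSol_iff_isExtremal.2 hxy, fun x' y' h' => ?_⟩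
  rw [extremalSol_iff_isExtremal] at h'
  have hx' := h'.mapsTo_Icc (fun t _ => hF t) (fun t _ => hG t) (fun s hs => hw0 s hs.le)
    (fun s hs => hw1 s hs.le) hx₀'
  have hw'_anti : AntitoneOn (deriv w) (Icc 0 1) :=
    antitoneOn_of_deriv_nonpos (convex_Icc 0 1) hw'.continuous.continuousOn
      (hw'.differentiable one_ne_zero).differentiableOn
      fun s hs => hw'' s (interior_subset hs)
  obtain ⟨hxx', hyy'⟩ := IsExtremal.eqOn_of_antitoneOn hT (fun t _ => hF t) (fun t _ => (hG t).le)
    hw'_anti h' hxy hx' hx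
  exact fun t ht => ⟨hxx' ht, hyy' ht⟩

/-- Proposition: for a single-peaked wage distribution with `w'' ≤ 0` on `[0,1]`
and `0 ≤ x₀ < x₁`, the boundary value system `ẋ = y/F`,
`ẏ = -w'(x) λ₁ e^{-rt}`, `x(0) = x₀`, `y(T) = 0` has exactly one solution on
`[0,T]`: there exists a unique extremal. -/
theorem unique_extremal_single_peak
    (ρ r η ξ lam1 T x₀ x₁ : ℝ)
    (hρ : 0 < ρ) (hr : 0 < r) (hη : 0 < η) (hξ : 0 < ξ)
    (hlam1 : 0 < lam1) (hT : 0 < T)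
    (w : ℝ → ℝ) (hw : ContDiff ℝ 2 w) (hwbdd : ∃ M : ℝ, ∀ s : ℝ, |w s| ≤ M)
    (hw0 : ∀ s : ℝ, s ≤ 0 → 0 < deriv w s)
    (hw1 : ∀ s : ℝ, 1 ≤ s → deriv w s < 0)
    (hpeak : SinglePeakedConcave w x₁)
    (hx₀ : 0 ≤ x₀) (hx₀x₁ : x₀ < x₁) :
    ∃ x y : ℝ → ℝ, ExtremalSol ρ r η ξ lam1 T x₀ w x y ∧
      ∀ x' y' : ℝ → ℝ, ExtremalSol ρ r η ξ lam1 T x₀ w x' y' →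
        ∀ t ∈ Set.Icc (0:ℝ) T, x' t = x t ∧ y' t = y t :=
  unique_extremal_single_peak_general ρ r η ξ lam1 T x₀ x₁ hη hξ hlam1 hT w hw hw0 hw1 hpeak hx₀
    hx₀x₁
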